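/- arXiv:2504.10634 — 6 statements merged into one kernel-verified Lean document; each statement's English description precedes it below -/
import Mathlib

section
/- Let f : ℝ → ℝ be continuous, let h₁ > 1 be a real constant, set F(t) := ∫₀ᵗ f(τ) dτ, and assume h₁·F(t) ≤ t·f(t) for all t ∈ ℝ. Then for every t with |t| ≥ 1 one has F(t) ≥ B·|t|^{h₁}, where B := min{F(1), F(-1)}. -/
open Set

private lemma aux_growth (g : ℝ → ℝ) (hg : Continuous g) (h₁ : ℝ) (hh₁ : 1 < h₁)
    (G : ℝ → ℝ) (hG : ∀ t : ℝ, G t = ∫ τ in (0 : ℝ)..t, g τ)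
    (hineq : ∀ t : ℝ, h₁ * G t ≤ t * g t) :
    ∀ t : ℝ, 1 ≤ t → G 1 * t ^ h₁ ≤ G t := by
  have hGd : ∀ s : ℝ, HasDerivAt G (g s) s := by
    intro s
    have : HasDerivAt (fun t => ∫ τ in (0 : ℝ)..t, g τ) (g s) s :=
      (intervalIntegral.integral_hasStrictDerivAt_right (hg.intervalIntegrable _ _)
        (hg.stronglyMeasurableAtFilter _ _) hg.continuousAt).hasDerivAt
    have hfun : G = fun t => ∫ τ in (0 : ℝ)..t, g τ := funext hG
    rw [hfun]
    exact this
  set Φ : ℝ → ℝ := fun s => G s * s ^ (-h₁) with hΦdef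
  have hΦd : ∀ s : ℝ, 0 < s →
      HasDerivAt Φ (g s * s ^ (-h₁) + G s * (-h₁ * s ^ (-h₁ - 1))) s := by
    intro s hs
    exact (hGd s).mul (Real.hasDerivAt_rpow_const (Or.inl hs.ne'))
  have hderiv_nonneg : ∀ s : ℝ, 0 < s →
      0 ≤ g s * s ^ (-h₁) + G s * (-h₁ * s ^ (-h₁ - 1)) := by
    intro s hs
    have h1 : s ^ (-h₁) = s * s ^ (-h₁ - 1) := by
      have h := Real.rpow_add hs 1 (-h₁ - 1)
      rw [Real.rpow_one] at h
      have he : 1 + (-h₁ - 1) = -h₁ := by ring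
      rw [he] at h
      exact h
    have h2 : g s * s ^ (-h₁) + G s * (-h₁ * s ^ (-h₁ - 1))
        = (s * g s - h₁ * G s) * s ^ (-h₁ - 1) := by
      rw [h1]; ring
    rw [h2]
    exact mul_nonneg (by linarith [hineq s]) (Real.rpow_nonneg hs.le _)
  have hmono : MonotoneOn Φ (Ici (1 : ℝ)) := by
    apply monotoneOn_of_deriv_nonneg (convex_Ici 1)
    · intro x hx
      have hx1 : (1:ℝ) ≤ x := hx
      exact ((hΦd x (by linarith)).continuousAt).continuousWithinAt
    · intro x hx
      have hx1 : (1:ℝ) < x := by simpa using hx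
      exact ((hΦd x (by linarith)).differentiableAt).differentiableWithinAt
    · intro x hx
      have hx1 : (1:ℝ) < x := by simpa using hx
      rw [(hΦd x (by linarith)).deriv]
      exact hderiv_nonneg x (by linarith)
  intro t ht
  have h1 : Φ 1 ≤ Φ t := hmono (by simp) (by simpa using ht) ht
  have hΦ1 : Φ 1 = G 1 := by simp [hΦdef]
  have hΦt : Φ t = G t * t ^ (-h₁) := rfl
  have htpos : (0:ℝ) < t := by linarith
  have htp : (0:ℝ) < t ^ h₁ := Real.rpow_pos_of_pos htpos _
  have := mul_le_mul_of_nonneg_right (hΦ1 ▸ hΦt ▸ h1) htp.le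
  calc G 1 * t ^ h₁ ≤ G t * t ^ (-h₁) * t ^ h₁ := this
    _ = G t := by
        rw [mul_assoc, ← Real.rpow_add htpos]
        simp

/-- Lower growth bound for the primitive `F` of `f`: if `h₁ > 1` and
`h₁ * F t ≤ t * f t` for all `t`, then `F t ≥ B * |t| ^ h₁` for `|t| ≥ 1`,
where `B = min (F 1) (F (-1))`. -/
theorem primitive_lower_growth_bound
    (f : ℝ → ℝ) (hf : Continuous f) (h₁ : ℝ) (hh₁ : 1 < h₁)
    (F : ℝ → ℝ) (hF : ∀ t : ℝ, F t = ∫ τ in (0 : ℝ)..t, f τ)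
    (hineq : ∀ t : ℝ, h₁ * F t ≤ t * f t) :
    ∀ t : ℝ, 1 ≤ |t| → min (F 1) (F (-1)) * |t| ^ h₁ ≤ F t := by
  intro t ht
  have hpow : (0:ℝ) < |t| ^ h₁ := Real.rpow_pos_of_pos (by linarith) _
  rcases le_or_gt 1 t with htp | htn
  · have := aux_growth f hf h₁ hh₁ F hF hineq t htp
    have habs : |t| = t := abs_of_nonneg (by linarith)
    rw [habs]
    calc min (F 1) (F (-1)) * t ^ h₁ ≤ F 1 * t ^ h₁ :=
          mul_le_mul_of_nonneg_right (min_le_left _ _) (by positivity)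
      _ ≤ F t := this
  · -- t ≤ -1
    have htneg : t ≤ -1 := by
      rcases abs_cases t with ⟨h, _⟩ | ⟨h, _⟩
      · linarith
      · linarith
    set g : ℝ → ℝ := fun s => -f (-s) with hgdef
    have hgc : Continuous g := (hf.comp continuous_neg).neg
    set G : ℝ → ℝ := fun s => F (-s) with hGdef
    have hG : ∀ s : ℝ, G s = ∫ τ in (0 : ℝ)..s, g τ := by
      intro s
      have : (∫ τ in (0:ℝ)..s, f (-τ)) = ∫ τ in (-s)..(0:ℝ), f τ := by
        simpa using intervalIntegral.integral_comp_neg (a := (0:ℝ)) (b := s) f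
      simp only [hGdef, hgdef, hF]
      rw [intervalIntegral.integral_neg, this, intervalIntegral.integral_symm]
    have hGineq : ∀ s : ℝ, h₁ * G s ≤ s * g s := by
      intro s
      have := hineq (-s)
      simp only [hGdef, hgdef]
      nlinarith [this]
    have key := aux_growth g hgc h₁ hh₁ G hG hGineq (-t) (by linarith)
    have habs : |t| = -t := abs_of_neg (by linarith)
    have hGt : G (-t) = F t := by simp [hGdef]
    rw [habs]
    calc min (F 1) (F (-1)) * (-t) ^ h₁ ≤ F (-1) * (-t) ^ h₁ :=
          mul_le_mul_of_nonneg_right (min_le_right _ _) (Real.rpow_nonneg (by linarith) _)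
      _ = G 1 * (-t) ^ h₁ := by simp [hGdef]
      _ ≤ G (-t) := key
      _ = F t := hGt
end

section
/- Let f : ℝ → ℝ be continuous, let h₂ > 1 be a real constant, set F(t) := ∫₀ᵗ f(τ) dτ, and assume F(t) ≥ 0 and t·f(t) ≤ h₂·F(t) for all t ∈ ℝ. Then for every t with |t| ≥ 1 one has F(t) ≤ A·|t|^{h₂}, where A := max{F(1), F(-1)}. -/
private lemma primitive_upper_growth_aux
    (f : ℝ → ℝ) (hf : Continuous f) (h₂ : ℝ) (hh₂ : 1 < h₂)
    (F : ℝ → ℝ) (hF : ∀ t : ℝ, F t = ∫ τ in (0 : ℝ)..t, f τ)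
    (hineq : ∀ t : ℝ, t * f t ≤ h₂ * F t) :
    ∀ t : ℝ, 1 ≤ t → F t ≤ F 1 * t ^ h₂ := by
  have hF' : ∀ t : ℝ, HasDerivAt F (f t) t := by
    intro t
    have h := (hf.integral_hasStrictDerivAt (a := 0) (b := t)).hasDerivAt
    have : F = fun u => ∫ τ in (0 : ℝ)..u, f τ := funext hF
    rw [this]
    exact h
  set g : ℝ → ℝ := fun t => F t * t ^ (-h₂) with hg
  have hg' : ∀ t : ℝ, 0 < t →
      HasDerivAt g (f t * t ^ (-h₂) + F t * (-h₂ * t ^ (-h₂ - 1))) t := by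
    intro t ht
    exact (hF' t).mul (Real.hasDerivAt_rpow_const (Or.inl ht.ne'))
  have hanti : AntitoneOn g (Set.Ici (1 : ℝ)) := by
    apply antitoneOn_of_deriv_nonpos (convex_Ici 1)
    · intro t ht
      exact ((hg' t (lt_of_lt_of_le one_pos ht)).continuousAt).continuousWithinAt
    · intro t ht
      rw [interior_Ici] at ht
      exact (hg' t (lt_trans one_pos ht)).differentiableAt.differentiableWithinAt
    · intro t ht
      rw [interior_Ici] at ht
      have ht0 : (0 : ℝ) < t := lt_trans one_pos ht
      rw [(hg' t ht0).deriv]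
      have e : t ^ (-h₂) = t ^ (-h₂ - 1) * t := by
        rw [← Real.rpow_add_one ht0.ne' (-h₂ - 1)]
        ring_nf
      have hp : (0 : ℝ) ≤ t ^ (-h₂ - 1) := Real.rpow_nonneg ht0.le _
      have hi := hineq t
      rw [e]
      nlinarith [mul_le_mul_of_nonneg_left hi hp]
  intro t ht
  have ht0 : (0 : ℝ) < t := lt_of_lt_of_le one_pos ht
  have h1 : g t ≤ g 1 := hanti (Set.self_mem_Ici) (by exact ht) ht
  have hg1 : g 1 = F 1 := by simp [hg, Real.one_rpow]
  have := mul_le_mul_of_nonneg_right h1 (Real.rpow_nonneg ht0.le h₂)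
  rw [hg1] at this
  calc F t = F t * t ^ (-h₂) * t ^ h₂ := by
              rw [mul_assoc, ← Real.rpow_add ht0, neg_add_cancel, Real.rpow_zero, mul_one]
       _ ≤ F 1 * t ^ h₂ := this

/-- Upper growth bound for the primitive `F` of `f`: if `h₂ > 1`, `F ≥ 0` and
`t * f t ≤ h₂ * F t` for all `t`, then `F t ≤ A * |t| ^ h₂` for `|t| ≥ 1`,
where `A = max (F 1) (F (-1))`. -/
theorem primitive_upper_growth_bound
    (f : ℝ → ℝ) (hf : Continuous f) (h₂ : ℝ) (hh₂ : 1 < h₂)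
    (F : ℝ → ℝ) (hF : ∀ t : ℝ, F t = ∫ τ in (0 : ℝ)..t, f τ)
    (hFnonneg : ∀ t : ℝ, 0 ≤ F t)
    (hineq : ∀ t : ℝ, t * f t ≤ h₂ * F t) :
    ∀ t : ℝ, 1 ≤ |t| → F t ≤ max (F 1) (F (-1)) * |t| ^ h₂ := by
  intro t ht
  rcases le_abs.mp ht with h | h
  · have := primitive_upper_growth_aux f hf h₂ hh₂ F hF hineq t h
    have habs : |t| = t := abs_of_nonneg (le_trans zero_le_one h)
    rw [habs]
    calc F t ≤ F 1 * t ^ h₂ := this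
      _ ≤ max (F 1) (F (-1)) * t ^ h₂ :=
          mul_le_mul_of_nonneg_right (le_max_left _ _)
            (Real.rpow_nonneg (le_trans zero_le_one h) h₂)
  · -- t ≤ -1 : apply the aux lemma to the reflected data
    set G : ℝ → ℝ := fun s => F (-s) with hGdef
    have hG : ∀ s : ℝ, G s = ∫ τ in (0 : ℝ)..s, (fun u => -f (-u)) τ := by
      intro s
      have : (∫ τ in (0 : ℝ)..s, -f (-τ)) = -∫ τ in (0 : ℝ)..s, f (-τ) := by
        simp [intervalIntegral.integral_neg]
      rw [hGdef]
      simp only []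
      rw [this, intervalIntegral.integral_comp_neg (a := 0) (b := s) f,
        ← intervalIntegral.integral_symm, hF (-s)]
      norm_num
    have hGineq : ∀ s : ℝ, s * (fun u => -f (-u)) s ≤ h₂ * G s := by
      intro s
      have := hineq (-s)
      simpa [hGdef, neg_mul, mul_comm] using this
    have hcont : Continuous (fun u => -f (-u)) := (hf.comp continuous_neg).neg
    have key := primitive_upper_growth_aux _ hcont h₂ hh₂ G hG hGineq (-t)
      (by linarith)
    have habs : |t| = -t := abs_of_nonpos (by linarith)
    have hGt : G (-t) = F t := by simp [hGdef]
    have hG1 : G 1 = F (-1) := by simp [hGdef]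
    rw [habs]
    calc F t = G (-t) := hGt.symm
      _ ≤ G 1 * (-t) ^ h₂ := key
      _ = F (-1) * (-t) ^ h₂ := by rw [hG1]
      _ ≤ max (F 1) (F (-1)) * (-t) ^ h₂ :=
          mul_le_mul_of_nonneg_right (le_max_right _ _)
            (Real.rpow_nonneg (by linarith) h₂)
end

section
/- Let f : ℝ → ℝ be continuous, let 1 < h₁ ≤ h₂ be real constants, set F(t) := ∫₀ᵗ f(τ) dτ, and assume F(t) ≥ 0 and h₁·F(t) ≤ t·f(t) ≤ h₂·F(t) for all t ∈ ℝ. Then for every t with |t| ≥ 1 one has h₁·B·|t|^{h₁} ≤ t·f(t) ≤ h₂·A·|t|^{h₂}, where B := min{F(1), F(-1)} and A := max{F(1), F(-1)}. -/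
/-! The derivative of `t ↦ F t * t ^ (-h)` is `t ^ (-h - 1) * (t * f t - h * F t)`, so
the hypothesis `h₁ * F ≤ t * f` makes `F t * t ^ (-h₁)` nondecreasing on `(0, ∞)`, and
`t * f ≤ h₂ * F` makes `F t * t ^ (-h₂)` nonincreasing there. Comparing with `t = 1` gives
`F 1 * t ^ h₁ ≤ F t ≤ F 1 * t ^ h₂` for `t ≥ 1`, and the hypotheses turn this into bounds on
`t * f t`. Negative `t` reduce to positive ones through the reflection `s ↦ F (-s)`. -/

open Set

section Homogeneity

variable {F f : ℝ → ℝ} {h : ℝ}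

theorem hasDerivAt_mul_rpow_neg {x : ℝ} (hx : 0 < x) (hd : HasDerivAt F (f x) x) :
    HasDerivAt (fun t => F t * t ^ (-h)) (x ^ (-h - 1) * (x * f x - h * F x)) x := by
  refine (hd.mul (Real.hasDerivAt_rpow_const (p := -h) (Or.inl hx.ne'))).congr_deriv ?_
  rw [Real.rpow_sub_one hx.ne']
  field_simp
  ring

theorem monotoneOn_mul_rpow_neg (hd : ∀ x, 0 < x → HasDerivAt F (f x) x)
    (hineq : ∀ x, 0 < x → h * F x ≤ x * f x) :
    MonotoneOn (fun t => F t * t ^ (-h)) (Ioi 0) := by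
  have hderiv (x : ℝ) (hx : x ∈ Ioi 0) := hasDerivAt_mul_rpow_neg (h := h) hx (hd x hx)
  refine monotoneOn_of_hasDerivWithinAt_nonneg (convex_Ioi 0)
    (fun x hx => (hderiv x hx).continuousAt.continuousWithinAt)
    (fun x hx => (hderiv x (interior_subset hx)).hasDerivWithinAt) fun x hx => ?_
  rw [interior_Ioi] at hx
  exact mul_nonneg (Real.rpow_nonneg hx.le _) (sub_nonneg.mpr (hineq x hx))

theorem mul_rpow_le_of_le_mul_deriv (hd : ∀ x, 0 < x → HasDerivAt F (f x) x)
    (hineq : ∀ x, 0 < x → h * F x ≤ x * f x) {t : ℝ} (ht : 1 ≤ t) :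
    F 1 * t ^ h ≤ F t := by
  have ht₀ : 0 < t := one_pos.trans_le ht
  have hmono := monotoneOn_mul_rpow_neg hd hineq (mem_Ioi.mpr one_pos) (mem_Ioi.mpr ht₀) ht
  simp only [Real.one_rpow, mul_one] at hmono
  calc F 1 * t ^ h ≤ F t * t ^ (-h) * t ^ h := by gcongr
    _ = F t := by rw [mul_assoc, ← Real.rpow_add ht₀, neg_add_cancel, Real.rpow_zero, mul_one]

theorem le_mul_rpow_of_mul_deriv_le (hd : ∀ x, 0 < x → HasDerivAt F (f x) x)
    (hineq : ∀ x, 0 < x → x * f x ≤ h * F x) {t : ℝ} (ht : 1 ≤ t) :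
    F t ≤ F 1 * t ^ h := by
  have := mul_rpow_le_of_le_mul_deriv (F := -F) (f := -f) (fun x hx => (hd x hx).neg)
    (fun x hx => by simpa only [Pi.neg_apply, mul_neg, neg_le_neg_iff] using hineq x hx) ht
  simpa only [Pi.neg_apply, neg_mul, neg_le_neg_iff] using this

theorem mul_deriv_bounds_of_one_le {h₁ h₂ : ℝ} (h₁_nonneg : 0 ≤ h₁) (h₂_nonneg : 0 ≤ h₂)
    (hd : ∀ x, 0 < x → HasDerivAt F (f x) x)
    (hineq₁ : ∀ x, 0 < x → h₁ * F x ≤ x * f x) (hineq₂ : ∀ x, 0 < x → x * f x ≤ h₂ * F x)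
    {t : ℝ} (ht : 1 ≤ t) :
    h₁ * F 1 * t ^ h₁ ≤ t * f t ∧ t * f t ≤ h₂ * F 1 * t ^ h₂ := by
  have ht₀ : 0 < t := one_pos.trans_le ht
  constructor
  · calc h₁ * F 1 * t ^ h₁ = h₁ * (F 1 * t ^ h₁) := mul_assoc _ _ _
      _ ≤ h₁ * F t := by gcongr; exact mul_rpow_le_of_le_mul_deriv hd hineq₁ ht
      _ ≤ t * f t := hineq₁ t ht₀
  · calc t * f t ≤ h₂ * F t := hineq₂ t ht₀
      _ ≤ h₂ * (F 1 * t ^ h₂) := by gcongr; exact le_mul_rpow_of_mul_deriv_le hd hineq₂ ht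
      _ = h₂ * F 1 * t ^ h₂ := (mul_assoc _ _ _).symm

end Homogeneity

theorem tf_two_sided_growth_bound_general
    (f : ℝ → ℝ) (hf : Continuous f) (h₁ h₂ : ℝ) (hh₁ : 1 < h₁) (hh₁₂ : h₁ ≤ h₂)
    (F : ℝ → ℝ) (hF : ∀ t : ℝ, F t = ∫ τ in (0 : ℝ)..t, f τ)
    (hineq₁ : ∀ t : ℝ, h₁ * F t ≤ t * f t)
    (hineq₂ : ∀ t : ℝ, t * f t ≤ h₂ * F t) :
    ∀ t : ℝ, 1 ≤ |t| →
      h₁ * min (F 1) (F (-1)) * |t| ^ h₁ ≤ t * f t ∧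
      t * f t ≤ h₂ * max (F 1) (F (-1)) * |t| ^ h₂ := by
  have h₁_nonneg : 0 ≤ h₁ := zero_le_one.trans hh₁.le
  have h₂_nonneg : 0 ≤ h₂ := h₁_nonneg.trans hh₁₂
  have hd (x : ℝ) : HasDerivAt F (f x) x :=
    funext hF ▸ (hf.integral_hasStrictDerivAt 0 x).hasDerivAt
  intro t ht
  rcases le_abs'.mp ht with ht_neg | ht_pos
  · obtain ⟨lower, upper⟩ := mul_deriv_bounds_of_one_le
      (F := fun s => F (-s)) (f := fun s => -f (-s)) h₁_nonneg h₂_nonneg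
      (fun x _ => by simpa [Function.comp_def] using (hd (-x)).comp x (hasDerivAt_neg' x))
      (fun x _ => by simpa only [mul_neg, neg_mul] using hineq₁ (-x))
      (fun x _ => by simpa only [mul_neg, neg_mul] using hineq₂ (-x))
      (le_neg_of_le_neg ht_neg)
    simp only [neg_neg, mul_neg, neg_mul] at lower upper
    rw [← abs_of_neg (by linarith : t < 0)] at lower upper
    exact ⟨le_trans (by gcongr; exact min_le_right _ _) lower,
      upper.trans (by gcongr; exact le_max_right _ _)⟩
  · obtain ⟨lower, upper⟩ := mul_deriv_bounds_of_one_le h₁_nonneg h₂_nonneg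
      (fun x _ => hd x) (fun x _ => hineq₁ x) (fun x _ => hineq₂ x) ht_pos
    rw [abs_of_pos (by linarith)]
    exact ⟨le_trans (by gcongr; exact min_le_left _ _) lower,
      upper.trans (by gcongr; exact le_max_left _ _)⟩

/-- Two-sided growth bound for `t * f t`: if `1 < h₁ ≤ h₂`, `F ≥ 0` and
`h₁ * F t ≤ t * f t ≤ h₂ * F t` for all `t`, then for `|t| ≥ 1` one has
`h₁ * B * |t| ^ h₁ ≤ t * f t ≤ h₂ * A * |t| ^ h₂`, where
`B = min (F 1) (F (-1))` and `A = max (F 1) (F (-1))`. -/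
theorem tf_two_sided_growth_bound
    (f : ℝ → ℝ) (hf : Continuous f) (h₁ h₂ : ℝ) (hh₁ : 1 < h₁) (hh₁₂ : h₁ ≤ h₂)
    (F : ℝ → ℝ) (hF : ∀ t : ℝ, F t = ∫ τ in (0 : ℝ)..t, f τ)
    (hFnonneg : ∀ t : ℝ, 0 ≤ F t)
    (hineq₁ : ∀ t : ℝ, h₁ * F t ≤ t * f t)
    (hineq₂ : ∀ t : ℝ, t * f t ≤ h₂ * F t) :
    ∀ t : ℝ, 1 ≤ |t| →
      h₁ * min (F 1) (F (-1)) * |t| ^ h₁ ≤ t * f t ∧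
      t * f t ≤ h₂ * max (F 1) (F (-1)) * |t| ^ h₂ :=
  tf_two_sided_growth_bound_general f hf h₁ h₂ hh₁ hh₁₂ F hF hineq₁ hineq₂
end

section
/- Let g : ℝ → ℝ be continuous with g(t) ≥ 0 for t ≥ 0, set G(t) := ∫₀ᵗ g(τ) dτ, and let 1 < g⁻ ≤ g⁺ be real constants satisfying g⁻·G(t) ≤ t·g(t) ≤ g⁺·G(t) for all t > 0. Then for all τ > 0 and all t > 0: min{τ^{g⁻}, τ^{g⁺}}·G(t) ≤ G(τ·t) ≤ max{τ^{g⁻}, τ^{g⁺}}·G(t). -/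
/-! The quotient `G s / s ^ p` has derivative `s ^ (-p - 1) * (s * g s - p * G s)`, so the
two-sided bound on `t * g t` makes `G s / s ^ g⁻` nondecreasing and `G s / s ^ g⁺` nonincreasing
on `(0, ∞)`. Comparing these quotients at `t` and `τ * t` gives `G (τ * t)` between `τ ^ g⁻ * G t`
and `τ ^ g⁺ * G t`, in the order dictated by whether `τ ≥ 1` or `τ ≤ 1`. -/

open Set

section ScaledQuotient

variable {G : ℝ → ℝ} {p : ℝ}

lemma hasDerivAt_mul_rpow_neg_s7 {G' s : ℝ} (hG : HasDerivAt G G' s) (hs : 0 < s) (p : ℝ) :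
    HasDerivAt (fun x => G x * x ^ (-p)) (s ^ (-p - 1) * (s * G' - p * G s)) s := by
  refine (hG.mul (Real.hasDerivAt_rpow_const (p := -p) (Or.inl hs.ne'))).congr_deriv ?_
  rw [Real.rpow_sub_one hs.ne']
  field_simp
  ring

lemma monotoneOn_mul_rpow_neg_s7 {g : ℝ → ℝ} (hG : ∀ s, 0 < s → HasDerivAt G (g s) s)
    (h : ∀ s, 0 < s → p * G s ≤ s * g s) :
    MonotoneOn (fun s => G s * s ^ (-p)) (Ioi 0) := by
  have hderiv (s : ℝ) (hs : 0 < s) := hasDerivAt_mul_rpow_neg_s7 (hG s hs) hs p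
  refine monotoneOn_of_hasDerivWithinAt_nonneg
    (f' := fun s => s ^ (-p - 1) * (s * g s - p * G s)) (convex_Ioi 0)
    (fun s hs => (hderiv s hs).continuousAt.continuousWithinAt) ?_ ?_
  · rw [interior_Ioi]
    exact fun s hs => (hderiv s hs).hasDerivWithinAt
  · rw [interior_Ioi]
    exact fun s hs => mul_nonneg (Real.rpow_pos_of_pos hs _).le (sub_nonneg.mpr (h s hs))

lemma antitoneOn_mul_rpow_neg {g : ℝ → ℝ} (hG : ∀ s, 0 < s → HasDerivAt G (g s) s)
    (h : ∀ s, 0 < s → s * g s ≤ p * G s) :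
    AntitoneOn (fun s => G s * s ^ (-p)) (Ioi 0) := by
  have hneg : MonotoneOn (fun s => -G s * s ^ (-p)) (Ioi 0) :=
    monotoneOn_mul_rpow_neg_s7 (g := fun s => -g s) (fun s hs => (hG s hs).neg)
      (fun s hs => by linarith [h s hs])
  simpa only [neg_mul, neg_neg] using hneg.neg

lemma sub_rpow_mul_eq {τ t : ℝ} (hτ : 0 < τ) (ht : 0 < t) :
    G (τ * t) - τ ^ p * G t =
      (τ * t) ^ p * (G (τ * t) * (τ * t) ^ (-p) - G t * t ^ (-p)) := by
  have hτt := mul_pos hτ ht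
  rw [mul_sub, Real.rpow_neg hτt.le, Real.rpow_neg ht.le, Real.mul_rpow hτ.le ht.le]
  field_simp

lemma rpow_mul_le_of_monotoneOn (hmono : MonotoneOn (fun s => G s * s ^ (-p)) (Ioi 0))
    {τ t : ℝ} (hτ : 1 ≤ τ) (ht : 0 < t) : τ ^ p * G t ≤ G (τ * t) := by
  have hτ0 : 0 < τ := one_pos.trans_le hτ
  have hτt := mul_pos hτ0 ht
  have hle := hmono ht hτt (le_mul_of_one_le_left ht.le hτ)
  rw [← sub_nonneg, sub_rpow_mul_eq hτ0 ht]
  exact mul_nonneg (Real.rpow_pos_of_pos hτt p).le (sub_nonneg.mpr hle)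

lemma le_rpow_mul_of_monotoneOn (hmono : MonotoneOn (fun s => G s * s ^ (-p)) (Ioi 0))
    {τ t : ℝ} (hτ : 0 < τ) (hτ1 : τ ≤ 1) (ht : 0 < t) : G (τ * t) ≤ τ ^ p * G t := by
  have hτt := mul_pos hτ ht
  have hle := hmono hτt ht (mul_le_of_le_one_left ht.le hτ1)
  rw [← sub_nonpos, sub_rpow_mul_eq hτ ht]
  exact mul_nonpos_of_nonneg_of_nonpos (Real.rpow_pos_of_pos hτt p).le (sub_nonpos.mpr hle)

lemma le_rpow_mul_of_antitoneOn (hanti : AntitoneOn (fun s => G s * s ^ (-p)) (Ioi 0))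
    {τ t : ℝ} (hτ : 1 ≤ τ) (ht : 0 < t) : G (τ * t) ≤ τ ^ p * G t := by
  have := rpow_mul_le_of_monotoneOn (G := fun s => -G s) (by simpa only [neg_mul] using hanti.neg)
    hτ ht
  linarith

lemma rpow_mul_le_of_antitoneOn (hanti : AntitoneOn (fun s => G s * s ^ (-p)) (Ioi 0))
    {τ t : ℝ} (hτ : 0 < τ) (hτ1 : τ ≤ 1) (ht : 0 < t) : τ ^ p * G t ≤ G (τ * t) := by
  have := le_rpow_mul_of_monotoneOn (G := fun s => -G s) (by simpa only [neg_mul] using hanti.neg)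
    hτ hτ1 ht
  linarith

end ScaledQuotient

theorem Nfunction_scaling_estimate_general
    (g : ℝ → ℝ) (hg : Continuous g)
    (G : ℝ → ℝ) (hG : ∀ t : ℝ, G t = ∫ τ in (0 : ℝ)..t, g τ)
    (gm gp : ℝ) (hgmp : gm ≤ gp)
    (hineq : ∀ t : ℝ, 0 < t → gm * G t ≤ t * g t ∧ t * g t ≤ gp * G t) :
    ∀ τ t : ℝ, 0 < τ → 0 < t →
      min (τ ^ gm) (τ ^ gp) * G t ≤ G (τ * t) ∧
      G (τ * t) ≤ max (τ ^ gm) (τ ^ gp) * G t := by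
  have hG' (s : ℝ) (_ : 0 < s) : HasDerivAt G (g s) s := by
    rw [funext hG]
    exact (hg.integral_hasStrictDerivAt 0 s).hasDerivAt
  have hmono := monotoneOn_mul_rpow_neg_s7 hG' fun s hs => (hineq s hs).1
  have hanti := antitoneOn_mul_rpow_neg hG' fun s hs => (hineq s hs).2
  intro τ t hτ ht
  rcases le_total 1 τ with hτ1 | hτ1
  · have hle : τ ^ gm ≤ τ ^ gp := Real.rpow_le_rpow_of_exponent_le hτ1 hgmp
    rw [min_eq_left hle, max_eq_right hle]
    exact ⟨rpow_mul_le_of_monotoneOn hmono hτ1 ht, le_rpow_mul_of_antitoneOn hanti hτ1 ht⟩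
  · have hle : τ ^ gp ≤ τ ^ gm := Real.rpow_le_rpow_of_exponent_ge hτ hτ1 hgmp
    rw [min_eq_right hle, max_eq_left hle]
    exact ⟨rpow_mul_le_of_antitoneOn hanti hτ hτ1 ht, le_rpow_mul_of_monotoneOn hmono hτ hτ1 ht⟩

/-- Scaling estimate for an N-function `G` with indices `1 < g⁻ ≤ g⁺`:
`min (τ^g⁻) (τ^g⁺) * G t ≤ G (τ * t) ≤ max (τ^g⁻) (τ^g⁺) * G t` for all `τ, t > 0`. -/
theorem Nfunction_scaling_estimate
    (g : ℝ → ℝ) (hg : Continuous g) (hgnn : ∀ t : ℝ, 0 ≤ t → 0 ≤ g t)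
    (G : ℝ → ℝ) (hG : ∀ t : ℝ, G t = ∫ τ in (0 : ℝ)..t, g τ)
    (gm gp : ℝ) (hgm : 1 < gm) (hgmp : gm ≤ gp)
    (hineq : ∀ t : ℝ, 0 < t → gm * G t ≤ t * g t ∧ t * g t ≤ gp * G t) :
    ∀ τ t : ℝ, 0 < τ → 0 < t →
      min (τ ^ gm) (τ ^ gp) * G t ≤ G (τ * t) ∧
      G (τ * t) ≤ max (τ ^ gm) (τ ^ gp) * G t :=
  Nfunction_scaling_estimate_general g hg G hG gm gp hgmp hineq
end

section
/- Let g : ℝ → ℝ be continuous with g(t) ≥ 0 for t ≥ 0, set G(t) := ∫₀ᵗ g(τ) dτ, assume G(1) > 0, and let 1 < g⁻ ≤ g⁺ be real constants satisfying g⁻·G(t) ≤ t·g(t) ≤ g⁺·G(t) for all t > 0. Define the complementary function G̃(s) := sup_{τ ≥ 0} (s·τ − G(τ)) for s ≥ 0 (this supremum is finite since G(τ) ≥ G(1)·τ^{g⁻} for τ ≥ 1). Then for every τ ≥ 1 and every s ≥ 0: τ^{g⁺/(g⁺−1)}·G̃(s) ≤ G̃(τ·s) ≤ τ^{g⁻/(g⁻−1)}·G̃(s).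 -/
/-! The index bounds say that `t ↦ G t * t ^ (-g⁻)` increases and `t ↦ G t * t ^ (-g⁺)` decreases
on `(0, ∞)`, i.e. `l ^ g⁻ * G t ≤ G (l * t) ≤ l ^ g⁺ * G t` for `l ≥ 1`. In the supremum defining
`G̃ (τ * s)` substitute `u = r * v` with `r = τ ^ (1 / (p - 1))`: since `τ * r = r ^ p = τ ^ (p / (p - 1))`,
the scaling of `G` with exponent `p` turns into scaling of `G̃` with exponent `p / (p - 1)`. -/

open Set

theorem monotoneOn_mul_rpow_neg_of_le_mul_deriv {G g : ℝ → ℝ} {p : ℝ}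
    (hd : ∀ t, 0 < t → HasDerivAt G (g t) t) (h : ∀ t, 0 < t → p * G t ≤ t * g t) :
    MonotoneOn (fun t => G t * t ^ (-p)) (Ioi 0) := by
  have hderiv : ∀ t ∈ Ioi (0 : ℝ),
      HasDerivAt (fun t => G t * t ^ (-p)) (t ^ (-p) / t * (t * g t - p * G t)) t := by
    intro t (ht : 0 < t)
    refine ((hd t ht).mul (Real.hasDerivAt_rpow_const (Or.inl ht.ne'))).congr_deriv ?_
    rw [Real.rpow_sub_one ht.ne']
    field_simp
    ring
  refine monotoneOn_of_hasDerivWithinAt_nonneg (convex_Ioi 0)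
    (fun t ht => (hderiv t ht).continuousAt.continuousWithinAt)
    (fun t ht => (hderiv t (interior_subset ht)).hasDerivWithinAt) fun t ht => ?_
  rw [interior_Ioi] at ht
  exact mul_nonneg (div_nonneg (Real.rpow_nonneg (le_of_lt ht) _) (le_of_lt ht))
    (sub_nonneg.2 (h t ht))

theorem rpow_mul_le_of_le_mul_deriv {G g : ℝ → ℝ} {p : ℝ}
    (hd : ∀ t, 0 < t → HasDerivAt G (g t) t) (h : ∀ t, 0 < t → p * G t ≤ t * g t)
    (h0 : G 0 = 0) {l t : ℝ} (hl : 1 ≤ l) (ht : 0 ≤ t) : l ^ p * G t ≤ G (l * t) := by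
  rcases ht.eq_or_lt with rfl | ht
  · simp [h0]
  have hl0 : 0 < l := by linarith
  have hratio := monotoneOn_mul_rpow_neg_of_le_mul_deriv hd h ht (mul_pos hl0 ht)
    (le_mul_of_one_le_left ht.le hl)
  simp only [Real.rpow_neg ht.le, Real.rpow_neg (mul_pos hl0 ht).le,
    Real.mul_rpow hl0.le ht.le, ← div_eq_mul_inv] at hratio
  rw [div_le_div_iff₀ (by positivity) (by positivity)] at hratio
  nlinarith [Real.rpow_pos_of_pos ht p]

theorem le_rpow_mul_of_mul_deriv_le {G g : ℝ → ℝ} {p : ℝ}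
    (hd : ∀ t, 0 < t → HasDerivAt G (g t) t) (h : ∀ t, 0 < t → t * g t ≤ p * G t)
    (h0 : G 0 = 0) {l t : ℝ} (hl : 1 ≤ l) (ht : 0 ≤ t) : G (l * t) ≤ l ^ p * G t := by
  simpa using rpow_mul_le_of_le_mul_deriv (G := -G) (g := -g) (fun t ht => (hd t ht).neg)
    (fun t ht => by simpa using h t ht) (by simp [h0]) hl ht

theorem exists_one_le_rpow_eq_and_mul_eq {τ p : ℝ} (hp : 1 < p) (hτ : 1 ≤ τ) :
    ∃ r, 1 ≤ r ∧ r ^ p = τ ^ (p / (p - 1)) ∧ τ * r = τ ^ (p / (p - 1)) := by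
  have hp' : p - 1 ≠ 0 := by linarith
  refine ⟨τ ^ (p - 1)⁻¹, Real.one_le_rpow hτ (inv_nonneg.2 (by linarith)), ?_, ?_⟩
  · rw [← Real.rpow_mul (by linarith), inv_mul_eq_div]
  · rw [show p / (p - 1) = 1 + (p - 1)⁻¹ by field_simp; ring, Real.rpow_add (by linarith),
      Real.rpow_one]

noncomputable def youngConjugate (G : ℝ → ℝ) (s : ℝ) : ℝ :=
  sSup ((fun τ => s * τ - G τ) '' Ici 0)

theorem bddAbove_mul_sub_image_of_rpow_le {G : ℝ → ℝ} {c q : ℝ} (hc : 0 < c) (hq : 1 < q)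
    (hG0 : ∀ t, 0 ≤ t → 0 ≤ G t) (hGq : ∀ t, 1 ≤ t → c * t ^ q ≤ G t) (s : ℝ) :
    BddAbove ((fun τ => s * τ - G τ) '' Ici 0) := by
  -- for `t ≥ T` the growth `c * t ^ q` beats `|s| * t`
  set T := max 1 ((|s| / c) ^ (q - 1)⁻¹)
  have hT : 0 ≤ T := zero_le_one.trans (le_max_left _ _)
  refine ⟨|s| * T, forall_mem_image.2 fun t (ht : 0 ≤ t) => ?_⟩
  have hst : s * t ≤ |s| * t := mul_le_mul_of_nonneg_right (le_abs_self s) ht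
  rcases le_total t T with htT | hTt
  · nlinarith [hG0 t ht, abs_nonneg s]
  have ht1 : 1 ≤ t := (le_max_left _ _).trans hTt
  have hpow : |s| / c ≤ t ^ (q - 1) := by
    calc |s| / c = ((|s| / c) ^ (q - 1)⁻¹) ^ (q - 1) := by
          rw [← Real.rpow_mul (by positivity), inv_mul_cancel₀ (by linarith), Real.rpow_one]
      _ ≤ t ^ (q - 1) := Real.rpow_le_rpow (by positivity) ((le_max_right _ _).trans hTt)
          (by linarith)
  have hlin : |s| * t ≤ G t := by
    calc |s| * t ≤ c * t ^ (q - 1) * t := by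
          gcongr; rwa [div_le_iff₀' hc] at hpow
      _ = c * t ^ q := by
          rw [Real.rpow_sub_one (by positivity), mul_assoc, div_mul_cancel₀ _ (by positivity)]
      _ ≤ G t := hGq t ht1
  nlinarith [abs_nonneg s]

theorem mul_sub_le_youngConjugate {G : ℝ → ℝ} {s t : ℝ}
    (hbdd : BddAbove ((fun τ => s * τ - G τ) '' Ici 0)) (ht : 0 ≤ t) :
    s * t - G t ≤ youngConjugate G s :=
  le_csSup hbdd (mem_image_of_mem _ ht)

theorem youngConjugate_le {G : ℝ → ℝ} {s c : ℝ} (h : ∀ t, 0 ≤ t → s * t - G t ≤ c) :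
    youngConjugate G s ≤ c :=
  csSup_le (nonempty_Ici.image _) (forall_mem_image.2 h)

theorem rpow_mul_youngConjugate_le {G : ℝ → ℝ} {p τ s : ℝ} (hp : 1 < p) (hτ : 1 ≤ τ)
    (hG : ∀ l t, 1 ≤ l → 0 ≤ t → G (l * t) ≤ l ^ p * G t)
    (hbdd : BddAbove ((fun u => τ * s * u - G u) '' Ici 0)) :
    τ ^ (p / (p - 1)) * youngConjugate G s ≤ youngConjugate G (τ * s) := by
  obtain ⟨r, hr, hrp, hτr⟩ := exists_one_le_rpow_eq_and_mul_eq hp hτ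
  rw [← le_div_iff₀' (by positivity)]
  refine youngConjugate_le fun v hv => ?_
  rw [le_div_iff₀' (by positivity)]
  calc τ ^ (p / (p - 1)) * (s * v - G v)
      = τ * s * (r * v) - τ ^ (p / (p - 1)) * G v := by
        rw [← hτr]; ring
    _ ≤ τ * s * (r * v) - G (r * v) := by
        gcongr; rw [← hrp]; exact hG r v hr hv
    _ ≤ youngConjugate G (τ * s) := mul_sub_le_youngConjugate hbdd (by positivity)

theorem youngConjugate_mul_le_rpow_mul {G : ℝ → ℝ} {p τ s : ℝ} (hp : 1 < p) (hτ : 1 ≤ τ)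
    (hG : ∀ l t, 1 ≤ l → 0 ≤ t → l ^ p * G t ≤ G (l * t))
    (hbdd : BddAbove ((fun v => s * v - G v) '' Ici 0)) :
    youngConjugate G (τ * s) ≤ τ ^ (p / (p - 1)) * youngConjugate G s := by
  obtain ⟨r, hr, hrp, hτr⟩ := exists_one_le_rpow_eq_and_mul_eq hp hτ
  refine youngConjugate_le fun u hu => ?_
  have hGu : τ ^ (p / (p - 1)) * G (u / r) ≤ G u := by
    rw [← hrp]
    simpa [mul_div_cancel₀ u (by positivity : r ≠ 0)] using hG r (u / r) hr (by positivity)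
  calc τ * s * u - G u
      ≤ τ * s * u - τ ^ (p / (p - 1)) * G (u / r) := by gcongr
    _ = τ ^ (p / (p - 1)) * (s * (u / r) - G (u / r)) := by
        rw [← hτr]; field_simp
    _ ≤ τ ^ (p / (p - 1)) * youngConjugate G s := by
        gcongr; exact mul_sub_le_youngConjugate hbdd (by positivity)

/-- Scaling estimate for the Young conjugate `G̃` of an N-function `G` with indices
`1 < g⁻ ≤ g⁺`: for `τ ≥ 1` and `s ≥ 0`,
`τ^(g⁺/(g⁺-1)) * G̃ s ≤ G̃ (τ * s) ≤ τ^(g⁻/(g⁻-1)) * G̃ s`. -/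
theorem conjugate_Nfunction_scaling_estimate
    (g : ℝ → ℝ) (hg : Continuous g) (hgnn : ∀ t : ℝ, 0 ≤ t → 0 ≤ g t)
    (G : ℝ → ℝ) (hG : ∀ t : ℝ, G t = ∫ τ in (0 : ℝ)..t, g τ) (hG1 : 0 < G 1)
    (gm gp : ℝ) (hgm : 1 < gm) (hgmp : gm ≤ gp)
    (hineq : ∀ t : ℝ, 0 < t → gm * G t ≤ t * g t ∧ t * g t ≤ gp * G t)
    (Gt : ℝ → ℝ)
    (hGt : ∀ s : ℝ, Gt s = sSup ((fun τ => s * τ - G τ) '' Set.Ici (0 : ℝ))) :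
    ∀ τ : ℝ, 1 ≤ τ → ∀ s : ℝ, 0 ≤ s →
      τ ^ (gp / (gp - 1)) * Gt s ≤ Gt (τ * s) ∧
      Gt (τ * s) ≤ τ ^ (gm / (gm - 1)) * Gt s := by
  intro τ hτ s _
  obtain rfl : Gt = youngConjugate G := funext hGt
  have hd (t : ℝ) (_ : 0 < t) : HasDerivAt G (g t) t := by
    rw [funext hG]; exact (hg.integral_hasStrictDerivAt 0 t).hasDerivAt
  have h0 : G 0 = 0 := by rw [hG, intervalIntegral.integral_same]
  have hlow (l t : ℝ) (hl : 1 ≤ l) (ht : 0 ≤ t) : l ^ gm * G t ≤ G (l * t) :=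
    rpow_mul_le_of_le_mul_deriv hd (fun t ht => (hineq t ht).1) h0 hl ht
  have hhigh (l t : ℝ) (hl : 1 ≤ l) (ht : 0 ≤ t) : G (l * t) ≤ l ^ gp * G t :=
    le_rpow_mul_of_mul_deriv_le hd (fun t ht => (hineq t ht).2) h0 hl ht
  have hbdd : ∀ s, BddAbove ((fun u => s * u - G u) '' Ici 0) :=
    bddAbove_mul_sub_image_of_rpow_le hG1 hgm
      (fun t ht => hG t ▸ intervalIntegral.integral_nonneg ht fun u hu => hgnn u hu.1)
      (fun t ht => by simpa [mul_comm] using hlow t 1 ht zero_le_one)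
  exact ⟨rpow_mul_youngConjugate_le (hgm.trans_le hgmp) hτ hhigh (hbdd _),
    youngConjugate_mul_le_rpow_mul hgm hτ hlow (hbdd s)⟩
end

section
/- Let T > 0, β ∈ (0, 1/2), and let M : ℝ → ℝ be twice continuously differentiable on [0,T] with M(t) > 0 for all t ∈ [0,T], M'(0) > 0, and M(t)·M''(t) − (1/(2β))·(M'(t))² ≥ 0 for all t ∈ [0,T]. Set θ := (1 − 2β)/(2β) > 0. Then: (i) the function t ↦ M(t)^{−θ} is positive, strictly decreasing and concave on [0,T], and M(t)^{−θ} ≤ M(0)^{−θ} − θ·t·M(0)^{−θ−1}·M'(0) for all t ∈ [0,T]; (ii) consequently θ·M'(0)·T < M(0), and for every t ∈ [0,T] one has M(t) ≥ M(0)^{(θ+1)/θ}·(M(0) − θ·t·M'(0))^{−1/θ}. -/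
/-! For `F = M ^ (-θ)` one computes `F'' = -θ M ^ (-θ - 2) (M M'' - (θ + 1) M'²)`, and
`θ + 1 = 1 / (2β)`, so the hypothesis says precisely that `F` is concave. A concave function lies
below its tangent at `0`, whose slope `-θ M(0) ^ (-θ - 1) M'(0)` is negative; this makes `F`
strictly decreasing, and since `F > 0` on `[0, T]` the tangent line must stay positive up to `T`,
which is `θ M'(0) T < M(0)`. Raising `F(t) ≤ tangent` to the power `-1/θ` gives the lower bound
on `M`. -/

open Set

theorem HasDerivWithinAt.rpow_const_second_deriv {f f' : ℝ → ℝ} {f'' p x : ℝ} {s : Set ℝ}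
    (hf : HasDerivWithinAt f (f' x) s x) (hf' : HasDerivWithinAt f' f'' s x) (hx : f x ≠ 0) :
    HasDerivWithinAt (fun t => p * f t ^ (p - 1) * f' t)
      (p * f x ^ (p - 2) * (f x * f'' + (p - 1) * f' x ^ 2)) s x := by
  refine (((hf.rpow_const (p := p - 1) (Or.inl hx)).const_mul p).mul hf').congr_deriv ?_
  have hshift : f x ^ (p - 1) = f x ^ (p - 2) * f x := by
    rw [← Real.rpow_add_one hx]; ring_nf
  rw [show p - 1 - 1 = p - 2 by ring, hshift]
  ring

namespace ConcaveOn

variable {S : Set ℝ} {f : ℝ → ℝ} {x y d : ℝ}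

theorem le_add_mul_sub_of_hasDerivWithinAt (hfc : ConcaveOn ℝ S f) (hx : x ∈ S) (hy : y ∈ S)
    (hf : HasDerivWithinAt f d S x) : f y ≤ f x + d * (y - x) := by
  rcases lt_trichotomy x y with hxy | rfl | hyx
  · have hslope := hfc.slope_le_of_hasDerivWithinAt hx hy hxy hf
    rw [slope_def_field, div_le_iff₀ (sub_pos.2 hxy)] at hslope
    linarith
  · simp
  · have hslope := hfc.le_slope_of_hasDerivWithinAt hy hx hyx hf
    rw [slope_def_field, le_div_iff₀ (sub_pos.2 hyx)] at hslope
    linarith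

theorem strictAntiOn_Icc_of_hasDerivWithinAt_neg {a b : ℝ} (hfc : ConcaveOn ℝ (Icc a b) f)
    (hf : HasDerivWithinAt f d (Icc a b) a) (hd : d < 0) : StrictAntiOn f (Icc a b) := by
  intro s hs t ht hst
  have hat : a < t := hs.1.trans_lt hst
  have ha : a ∈ Icc a b := left_mem_Icc.2 (hat.le.trans ht.2)
  have hslope : slope f t s < 0 := calc
    slope f t s ≤ slope f t a := hfc.slope_anti ht ⟨ha, hat.ne⟩ ⟨hs, hst.ne⟩ hs.1
    _ = slope f a t := slope_comm f t a
    _ ≤ d := hfc.slope_le_of_hasDerivWithinAt ha ht hat hf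
    _ < 0 := hd
  rw [slope_def_field, div_neg_iff] at hslope
  rcases hslope with ⟨hfts, -⟩ | ⟨-, hst'⟩ <;> linarith

end ConcaveOn

theorem Real.rpow_neg_le_mul_iff {θ m m₀ c : ℝ} (hθ : 0 < θ) (hm : 0 < m) (hm₀ : 0 < m₀)
    (hc : 0 < c) : m ^ (-θ) ≤ m₀ ^ (-θ - 1) * c ↔ m₀ ^ ((θ + 1) / θ) * c ^ (-(1 / θ)) ≤ m := by
  have hm₀c : 0 < m₀ ^ (-θ - 1) * c := by positivity
  have hpow : (m₀ ^ (-θ - 1) * c) ^ (-θ)⁻¹ = m₀ ^ ((θ + 1) / θ) * c ^ (-(1 / θ)) := by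
    rw [Real.mul_rpow (by positivity) hc.le, ← Real.rpow_mul hm₀.le, inv_neg, ← one_div]
    congr 2
    field_simp
    ring
  rw [← hpow, Real.rpow_inv_le_iff_of_neg hm₀c hm (neg_lt_zero.2 hθ)]

theorem concaveOn_rpow_neg_of_sq_deriv_le {D : Set ℝ} (hD : Convex ℝ D) {M M' M'' : ℝ → ℝ}
    {θ : ℝ} (hθ : 0 ≤ θ) (hM' : ∀ t ∈ D, HasDerivWithinAt M (M' t) D t)
    (hM'' : ∀ t ∈ D, HasDerivWithinAt M' (M'' t) D t) (hpos : ∀ t ∈ D, 0 < M t)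
    (hineq : ∀ t ∈ D, (θ + 1) * M' t ^ 2 ≤ M t * M'' t) :
    ConcaveOn ℝ D (fun t => M t ^ (-θ)) := by
  have hF : ∀ t ∈ D, HasDerivWithinAt (fun t => M t ^ (-θ)) (-θ * M t ^ (-θ - 1) * M' t) D t :=
    fun t ht => ((hM' t ht).rpow_const (Or.inl (hpos t ht).ne')).congr_deriv (by ring)
  have hF' : ∀ t ∈ D, HasDerivWithinAt (fun t => -θ * M t ^ (-θ - 1) * M' t)
      (-θ * M t ^ (-θ - 2) * (M t * M'' t + (-θ - 1) * M' t ^ 2)) D t := fun t ht =>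
    (hM' t ht).rpow_const_second_deriv (hM'' t ht) (hpos t ht).ne'
  refine concaveOn_of_hasDerivWithinAt2_nonpos hD (fun t ht => (hF t ht).continuousWithinAt)
    (fun t ht => (hF t (interior_subset ht)).mono interior_subset)
    (fun t ht => (hF' t (interior_subset ht)).mono interior_subset) (fun t ht => ?_)
  replace ht := interior_subset ht
  refine mul_nonpos_of_nonpos_of_nonneg ?_ ?_
  · exact mul_nonpos_of_nonpos_of_nonneg (neg_nonpos.2 hθ) (Real.rpow_nonneg (hpos t ht).le _)
  · linarith [hineq t ht]

theorem levine_concavity_lemma_general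
    (T β : ℝ) (hT : 0 < T) (hβ : β ∈ Set.Ioo (0 : ℝ) (1 / 2))
    (M M' M'' : ℝ → ℝ)
    (hM' : ∀ t ∈ Set.Icc (0 : ℝ) T, HasDerivWithinAt M (M' t) (Set.Icc (0 : ℝ) T) t)
    (hM'' : ∀ t ∈ Set.Icc (0 : ℝ) T, HasDerivWithinAt M' (M'' t) (Set.Icc (0 : ℝ) T) t)
    (hMpos : ∀ t ∈ Set.Icc (0 : ℝ) T, 0 < M t)
    (hM'0 : 0 < M' 0)
    (hineq : ∀ t ∈ Set.Icc (0 : ℝ) T, 0 ≤ M t * M'' t - (1 / (2 * β)) * (M' t) ^ 2)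
    (θ : ℝ) (hθ : θ = (1 - 2 * β) / (2 * β)) :
    (0 < θ) ∧
    (∀ t ∈ Set.Icc (0 : ℝ) T, 0 < M t ^ (-θ)) ∧
    StrictAntiOn (fun t => M t ^ (-θ)) (Set.Icc (0 : ℝ) T) ∧
    ConcaveOn ℝ (Set.Icc (0 : ℝ) T) (fun t => M t ^ (-θ)) ∧
    (∀ t ∈ Set.Icc (0 : ℝ) T,
      M t ^ (-θ) ≤ M 0 ^ (-θ) - θ * t * M 0 ^ (-θ - 1) * M' 0) ∧
    (θ * M' 0 * T < M 0) ∧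
    (∀ t ∈ Set.Icc (0 : ℝ) T,
      M 0 ^ ((θ + 1) / θ) * (M 0 - θ * t * M' 0) ^ (-(1 / θ)) ≤ M t) := by
  obtain ⟨hβ0, hβ1⟩ := hβ
  have hθpos : 0 < θ := hθ ▸ div_pos (by linarith) (by linarith)
  have hθβ : θ + 1 = 1 / (2 * β) := by rw [hθ]; field_simp; ring
  have h0 : (0 : ℝ) ∈ Icc 0 T := left_mem_Icc.2 hT.le
  have hconc : ConcaveOn ℝ (Icc 0 T) (fun t => M t ^ (-θ)) :=
    concaveOn_rpow_neg_of_sq_deriv_le (convex_Icc 0 T) hθpos.le hM' hM'' hMpos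
      (fun t ht => by rw [hθβ]; exact sub_nonneg.1 (hineq t ht))
  have hF0 : HasDerivWithinAt (fun t => M t ^ (-θ)) (-θ * M 0 ^ (-θ - 1) * M' 0) (Icc 0 T) 0 :=
    ((hM' 0 h0).rpow_const (Or.inl (hMpos 0 h0).ne')).congr_deriv (by ring)
  have hF'0 : -θ * M 0 ^ (-θ - 1) * M' 0 < 0 := by
    have := mul_pos (mul_pos hθpos (Real.rpow_pos_of_pos (hMpos 0 h0) (-θ - 1))) hM'0
    linarith
  have htangent : ∀ t ∈ Icc 0 T, M t ^ (-θ) ≤ M 0 ^ (-θ) - θ * t * M 0 ^ (-θ - 1) * M' 0 :=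
    fun t ht => (hconc.le_add_mul_sub_of_hasDerivWithinAt h0 ht hF0).trans_eq (by ring)
  have hfactor : ∀ t : ℝ, M 0 ^ (-θ) - θ * t * M 0 ^ (-θ - 1) * M' 0 =
      M 0 ^ (-θ - 1) * (M 0 - θ * t * M' 0) := by
    intro t
    have hshift : M 0 ^ (-θ - 1) * M 0 = M 0 ^ (-θ) := by
      rw [← Real.rpow_add_one (hMpos 0 h0).ne']; ring_nf
    rw [mul_sub, hshift]
    ring
  have hT' : T ∈ Icc 0 T := right_mem_Icc.2 hT.le
  have hblowup : θ * M' 0 * T < M 0 := by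
    have hpos := (Real.rpow_pos_of_pos (hMpos T hT') (-θ)).trans_le (htangent T hT')
    rw [hfactor] at hpos
    linarith [pos_of_mul_pos_right hpos (Real.rpow_nonneg (hMpos 0 h0).le _)]
  refine ⟨hθpos, fun t ht => Real.rpow_pos_of_pos (hMpos t ht) _,
    hconc.strictAntiOn_Icc_of_hasDerivWithinAt_neg hF0 hF'0, hconc, htangent, hblowup,
    fun t ht => ?_⟩
  have hpos : 0 < M 0 - θ * t * M' 0 := by nlinarith [ht.2, mul_pos hθpos hM'0]
  exact (Real.rpow_neg_le_mul_iff hθpos (hMpos t ht) (hMpos 0 h0) hpos).1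
    ((htangent t ht).trans_eq (hfactor t))

/-- Quantitative form of Levine's concavity lemma: if `M > 0` on `[0, T]`,
`M'(0) > 0` and `M·M'' - (1/(2β))·(M')² ≥ 0` on `[0, T]` with `β ∈ (0, 1/2)`,
then for `θ = (1 - 2β)/(2β)` the function `M ^ (-θ)` is positive, strictly
decreasing and concave on `[0, T]`, lies below its tangent at `0`, whence
`θ·M'(0)·T < M(0)` and `M t ≥ M(0)^((θ+1)/θ)·(M(0) - θ·t·M'(0))^(-1/θ)`. -/
theorem levine_concavity_lemma
    (T β : ℝ) (hT : 0 < T) (hβ : β ∈ Set.Ioo (0 : ℝ) (1 / 2))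
    (M M' M'' : ℝ → ℝ)
    (hM' : ∀ t ∈ Set.Icc (0 : ℝ) T, HasDerivWithinAt M (M' t) (Set.Icc (0 : ℝ) T) t)
    (hM'' : ∀ t ∈ Set.Icc (0 : ℝ) T, HasDerivWithinAt M' (M'' t) (Set.Icc (0 : ℝ) T) t)
    (hM''cont : ContinuousOn M'' (Set.Icc (0 : ℝ) T))
    (hMpos : ∀ t ∈ Set.Icc (0 : ℝ) T, 0 < M t)
    (hM'0 : 0 < M' 0)
    (hineq : ∀ t ∈ Set.Icc (0 : ℝ) T, 0 ≤ M t * M'' t - (1 / (2 * β)) * (M' t) ^ 2)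
    (θ : ℝ) (hθ : θ = (1 - 2 * β) / (2 * β)) :
    (0 < θ) ∧
    (∀ t ∈ Set.Icc (0 : ℝ) T, 0 < M t ^ (-θ)) ∧
    StrictAntiOn (fun t => M t ^ (-θ)) (Set.Icc (0 : ℝ) T) ∧
    ConcaveOn ℝ (Set.Icc (0 : ℝ) T) (fun t => M t ^ (-θ)) ∧
    (∀ t ∈ Set.Icc (0 : ℝ) T,
      M t ^ (-θ) ≤ M 0 ^ (-θ) - θ * t * M 0 ^ (-θ - 1) * M' 0) ∧
    (θ * M' 0 * T < M 0) ∧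
    (∀ t ∈ Set.Icc (0 : ℝ) T,
      M 0 ^ ((θ + 1) / θ) * (M 0 - θ * t * M' 0) ^ (-(1 / θ)) ≤ M t) :=
  levine_concavity_lemma_general T β hT hβ M M' M'' hM' hM'' hMpos hM'0 hineq θ hθ
end
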